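/- Fix δ with 0 < δ < ρ − L and suppose that in Algorithm niAPG every inexact proximal step satisfies F(x_{k+1}) ≤ F(v_k) − (δ/2)·‖x_{k+1} − v_k‖² for all k ≥ 1. Assume F is bounded below and coercive (F(x) → +∞ as ‖x‖ → +∞). Then the sequences (x_k) and (v_k) are bounded and each has at least one limit point; moreover lim_{k→∞} min_{t ∈ W(k)} ‖x_{t+1} − v_t‖² = 0. -/

import Mathlib

open Filter Bornology Topology

/-!
The window maxima `Δ_k = max_{t ∈ W(k)} F(x_t)` drive the argument. Since both candidates for `v_k`
have value at most `Δ_k`, the sufficient-decrease condition gives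
`F(x_{k+1}) ≤ Δ_k - (δ/2)‖x_{k+1} - v_k‖²`. Hence `Δ` is nonincreasing, so every iterate lies in the
sublevel set `{F ≤ Δ_1}`, which is bounded by coercivity; in finite dimension bounded sequences have
convergent subsequences. Moreover every index of `W(k + q + 1)` is one step past an index of
`W(k + q)`, so `Δ_{k+q+1} ≤ Δ_k - (δ/2) min_{t ∈ W(k+q)} ‖x_{t+1} - v_t‖²`; as `Δ` converges
(`F` is bounded below), these minima tend to zero.
-/

def window (q k : ℕ) : Finset ℕ := Finset.Icc (max 1 (k - q)) k

theorem window_nonempty {q k : ℕ} (hk : 1 ≤ k) : (window q k).Nonempty :=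
  Finset.nonempty_Icc.mpr (by omega)

theorem mem_window {q k t : ℕ} : t ∈ window q k ↔ 1 ≤ t ∧ k - q ≤ t ∧ t ≤ k := by
  simp only [window, Finset.mem_Icc, max_le_iff, and_assoc]

section WindowMax

variable {a Δ : ℕ → ℝ} {q : ℕ}
  (hΔ : ∀ k (hk : 1 ≤ k), Δ k = (window q k).sup' (window_nonempty hk) a)
include hΔ

theorem le_windowMax_of_mem {k t : ℕ} (ht : t ∈ window q k) : a t ≤ Δ k := by
  have hk : 1 ≤ k := by rw [mem_window] at ht; omega
  exact hΔ k hk ▸ Finset.le_sup' a ht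

theorem le_windowMax {k : ℕ} (hk : 1 ≤ k) : a k ≤ Δ k :=
  le_windowMax_of_mem hΔ (mem_window.mpr ⟨hk, Nat.sub_le k q, le_rfl⟩)

theorem windowMax_succ_le (hstep : ∀ k, 1 ≤ k → a (k + 1) ≤ Δ k) {k : ℕ} (hk : 1 ≤ k) :
    Δ (k + 1) ≤ Δ k := by
  rw [hΔ (k + 1) (by omega)]
  refine Finset.sup'_le _ _ fun t ht => ?_
  rcases (mem_window.mp ht).2.2.eq_or_lt with rfl | hlt
  · exact hstep k hk
  · exact le_windowMax_of_mem hΔ (mem_window.mpr (by rw [mem_window] at ht; omega))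

theorem windowMax_le_of_le (hstep : ∀ k, 1 ≤ k → a (k + 1) ≤ Δ k) {k l : ℕ} (hk : 1 ≤ k)
    (hkl : k ≤ l) : Δ l ≤ Δ k := by
  induction l, hkl using Nat.le_induction with
  | base => exact le_rfl
  | succ l hkl ih => exact (windowMax_succ_le hΔ hstep (hk.trans hkl)).trans ih

variable {ε : ℝ} {c : ℕ → ℝ} (hε : 0 < ε) (hc : ∀ k, 0 ≤ c k)
  (hdesc : ∀ k, 1 ≤ k → a (k + 1) ≤ Δ k - ε * c k)
include hε hc hdesc

omit hΔ in
theorem le_windowMax_of_descent {k : ℕ} (hk : 1 ≤ k) : a (k + 1) ≤ Δ k :=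
  (hdesc k hk).trans (sub_le_self _ (mul_nonneg hε.le (hc k)))

theorem mul_window_inf'_le_sub {k : ℕ} (hk : q + 1 ≤ k) :
    ε * (window q k).inf' (window_nonempty (by omega)) c ≤ Δ (k - q) - Δ (k + 1) := by
  have hstep := fun k (hk : 1 ≤ k) => le_windowMax_of_descent hε hc hdesc hk
  suffices Δ (k + 1) ≤ Δ (k - q) - ε * (window q k).inf' (window_nonempty (by omega)) c by
    linarith
  rw [hΔ (k + 1) (by omega)]
  refine Finset.sup'_le _ _ fun t ht => ?_
  rw [mem_window] at ht
  obtain ⟨s, rfl⟩ : ∃ s, t = s + 1 := ⟨t - 1, by omega⟩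
  have hs : s ∈ window q k := mem_window.mpr (by omega)
  calc a (s + 1) ≤ Δ s - ε * c s := hdesc s (by omega)
    _ ≤ Δ (k - q) - ε * (window q k).inf' (window_nonempty (by omega)) c := by
      gcongr
      · exact windowMax_le_of_le hΔ hstep (by omega) (by omega)
      · exact Finset.inf'_le c hs

theorem tendsto_window_inf'_zero (hbdd : BddBelow (Set.range a)) :
    Tendsto (fun j => (window q (j + 1)).inf' (window_nonempty (by omega)) c) atTop (𝓝 0) := by
  have hstep := fun k (hk : 1 ≤ k) => le_windowMax_of_descent hε hc hdesc hk
  have hanti : Antitone fun j => Δ (j + 1) :=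
    antitone_nat_of_succ_le fun j => windowMax_succ_le hΔ hstep (by omega)
  have hbddΔ : BddBelow (Set.range fun j => Δ (j + 1)) := by
    obtain ⟨B, hB⟩ := hbdd
    exact ⟨B, Set.forall_mem_range.mpr fun j =>
      (hB (Set.mem_range_self (j + 1))).trans (le_windowMax hΔ (by omega))⟩
  have hlim := tendsto_atTop_ciInf hanti hbddΔ
  have hgap : Tendsto (fun j => (Δ (j - q + 1) - Δ (j + 1 + 1)) / ε) atTop (𝓝 0) := by
    simpa using ((hlim.comp (tendsto_sub_atTop_nat q)).sub
      (hlim.comp (tendsto_add_atTop_nat 1))).div_const ε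
  refine tendsto_of_tendsto_of_tendsto_of_le_of_le' tendsto_const_nhds hgap
    (Eventually.of_forall fun j => Finset.le_inf' _ _ fun t _ => hc t)
    (eventually_atTop.mpr ⟨q, fun j hj => ?_⟩)
  rw [le_div_iff₀ hε, mul_comm, show j - q + 1 = j + 1 - q by omega]
  exact mul_window_inf'_le_sub hΔ hε hc hdesc (by omega)

end WindowMax

theorem isBounded_setOf_le_of_tendsto_cobounded {α : Type*} [Bornology α] {F : α → ℝ}
    (hF : Tendsto F (cobounded α) atTop) (b : ℝ) : IsBounded {w | F w ≤ b} := by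
  rw [isBounded_def]
  exact (hF.eventually (eventually_gt_atTop b)).mono fun _ => not_le.mpr

theorem exists_tendsto_subseq_succ_of_norm_le {E : Type*} [NormedAddCommGroup E] [ProperSpace E]
    {u : ℕ → E} {C : ℝ} (hu : ∀ k, 1 ≤ k → ‖u k‖ ≤ C) :
    ∃ b : E, ∃ σ : ℕ → ℕ, StrictMono σ ∧ Tendsto (fun j => u (σ j + 1)) atTop (𝓝 b) := by
  obtain ⟨b, -, σ, hσ, hlim⟩ := tendsto_subseq_of_bounded (Metric.isBounded_closedBall (x := 0))
    fun n => mem_closedBall_zero_iff.mpr (hu (n + 1) (by omega))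
  exact ⟨b, σ, hσ, hlim⟩

theorem niAPG_nonconvex_bounded_limit_points
    {E : Type*} [NormedAddCommGroup E] [InnerProductSpace ℝ E] [FiniteDimensional ℝ E]
    (F : E → ℝ) (δ : ℝ)
    (hbdd : BddBelow (Set.range F))
    (hcoer : Tendsto F (Filter.comap (fun w : E => ‖w‖) atTop) atTop)
    (hδ : 0 < δ)
    (q : ℕ) (x y v : ℕ → E) (Δ : ℕ → ℝ)
    (hΔ : ∀ k, ∀ hk : 1 ≤ k, Δ k =
      (Finset.Icc (max 1 (k - q)) k).sup' (Finset.nonempty_Icc.mpr (by omega))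
        (fun t => F (x t)))
    (hv : ∀ k, 1 ≤ k → v k = if F (y k) ≤ Δ k then y k else x k)
    (hdec : ∀ k, 1 ≤ k →
      F (x (k + 1)) ≤ F (v k) - (δ / 2) * ‖x (k + 1) - v k‖ ^ 2)
    -- `m j` is `min_{t ∈ W(j+1)} ‖x_{t+1} − v_t‖²`
    (m : ℕ → ℝ)
    (hm : ∀ j : ℕ, m j = (Finset.Icc (max 1 (j + 1 - q)) (j + 1)).inf'
      (Finset.nonempty_Icc.mpr (by omega)) (fun t => ‖x (t + 1) - v t‖ ^ 2)) :
    (∃ C : ℝ, ∀ k, 1 ≤ k → ‖x k‖ ≤ C) ∧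
    (∃ C : ℝ, ∀ k, 1 ≤ k → ‖v k‖ ≤ C) ∧
    (∃ x' : E, ∃ σ : ℕ → ℕ, StrictMono σ ∧
      Tendsto (fun j => x (σ j + 1)) atTop (nhds x')) ∧
    (∃ v' : E, ∃ σ : ℕ → ℕ, StrictMono σ ∧
      Tendsto (fun j => v (σ j + 1)) atTop (nhds v')) ∧
    Tendsto m atTop (nhds 0) := by
  have hxΔ : ∀ k, 1 ≤ k → F (x k) ≤ Δ k := fun k hk => le_windowMax hΔ hk
  have hvΔ : ∀ k, 1 ≤ k → F (v k) ≤ Δ k := by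
    intro k hk
    rw [hv k hk]
    split_ifs with hyΔ
    exacts [hyΔ, hxΔ k hk]
  have hdesc : ∀ k, 1 ≤ k → F (x (k + 1)) ≤ Δ k - δ / 2 * ‖x (k + 1) - v k‖ ^ 2 :=
    fun k hk => (hdec k hk).trans (by linarith [hvΔ k hk])
  have hδ2 : 0 < δ / 2 := half_pos hδ
  have hstep : ∀ k, 1 ≤ k → F (x (k + 1)) ≤ Δ k :=
    fun k hk => le_windowMax_of_descent (a := fun t => F (x t)) hδ2 (fun _ => sq_nonneg _) hdesc hk
  rw [comap_norm_atTop] at hcoer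
  obtain ⟨C, hC⟩ := isBounded_iff_forall_norm_le.mp
    (isBounded_setOf_le_of_tendsto_cobounded hcoer (Δ 1))
  have hxC : ∀ k, 1 ≤ k → ‖x k‖ ≤ C :=
    fun k hk => hC _ ((hxΔ k hk).trans (windowMax_le_of_le hΔ hstep le_rfl hk))
  have hvC : ∀ k, 1 ≤ k → ‖v k‖ ≤ C :=
    fun k hk => hC _ ((hvΔ k hk).trans (windowMax_le_of_le hΔ hstep le_rfl hk))
  refine ⟨⟨C, hxC⟩, ⟨C, hvC⟩, exists_tendsto_subseq_succ_of_norm_le hxC,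
    exists_tendsto_subseq_succ_of_norm_le hvC, ?_⟩
  rw [funext hm]
  exact tendsto_window_inf'_zero hΔ hδ2 (fun _ => sq_nonneg _) hdesc
    (hbdd.mono (Set.range_comp_subset_range x F))
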